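/- arXiv:1711.09447 — 2 statements merged into one kernel-verified Lean document; each statement's English description precedes it below -/
import Mathlib

section
/- For the map F(x,y) = (y, -x + P(y)) with P(t) = M₁ + M₂t - δt³, the condition F⁻²(x,y) = F²(x,y) (equivalently F⁴(x,y) = (x,y)) is equivalent to the pair of equations (y² - yP(x) + P(x)² - δM₂)(-2y + P(x)) = 0 and (x² - xP(y) + P(y)² - δM₂)(-2x + P(y)) = 0. -/
/-- For `F(x,y) = (y, -x + P(y))` with `P(t) = M₁ + M₂ t - δ t³` and inverse
`F⁻¹(x,y) = (-y + P(x), x)`, the condition `F²(x,y) = F⁻²(x,y)` is equivalent to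
`(y² - yP(x) + P(x)² - δM₂)(-2y + P(x)) = 0` and
`(x² - xP(y) + P(y)² - δM₂)(-2x + P(y)) = 0`. -/
theorem stmt_13 (M₁ M₂ δ x y : ℝ) (hδ : δ = 1 ∨ δ = -1)
    (P : ℝ → ℝ) (hP : ∀ t, P t = M₁ + M₂ * t - δ * t ^ 3)
    (F Finv : ℝ × ℝ → ℝ × ℝ)
    (hF : ∀ a b : ℝ, F (a, b) = (b, -a + P b))
    (hFinv : ∀ a b : ℝ, Finv (a, b) = (-b + P a, a)) :
    F (F (x, y)) = Finv (Finv (x, y)) ↔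
      (y ^ 2 - y * P x + (P x) ^ 2 - δ * M₂) * (-2 * y + P x) = 0 ∧
      (x ^ 2 - x * P y + (P y) ^ 2 - δ * M₂) * (-2 * x + P y) = 0 := by
  simp only [hF, hFinv, Prod.mk.injEq, hP]
  rcases hδ with h | h <;> subst h <;>
    constructor
  · rintro ⟨h1, h2⟩
    exact ⟨by linear_combination h1, by linear_combination -h2⟩
  · rintro ⟨h1, h2⟩
    exact ⟨by linear_combination h1, by linear_combination -h2⟩
  · rintro ⟨h1, h2⟩
    exact ⟨by linear_combination -h1, by linear_combination h2⟩
  · rintro ⟨h1, h2⟩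
    exact ⟨by linear_combination -h1, by linear_combination h2⟩
end

section
/- The pitchfork bifurcation curve L₄³ of C₋, given parametrically by M₂ = 1/|1+2cos 2t| and M₁ = (2/(3√3))·√M₂·(3cos t - M₂·cos 3t) for π/3 < t < 2π/3, satisfies the implicit equation 27M₁² = 4(2+M₂)²(M₂-1). -/
/-- The pitchfork bifurcation curve `L₄³` of `C₋`: for `t ∈ (π/3, 2π/3)` (so that
`1 + 2cos 2t < 0`), setting `M₂ = -1/(1+2cos 2t)` and
`M₁ = (2/(3√3))·√M₂·(3cos t - M₂ cos 3t)` one has `27M₁² = 4(2+M₂)²(M₂-1)`. -/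
theorem stmt_16 (t M₁ M₂ : ℝ)
    (ht : Real.pi / 3 < t ∧ t < 2 * Real.pi / 3)
    (hM₂ : M₂ = -1 / (1 + 2 * Real.cos (2 * t)))
    (hM₁ : M₁ = 2 / (3 * Real.sqrt 3) * Real.sqrt M₂ *
      (3 * Real.cos t - M₂ * Real.cos (3 * t))) :
    27 * M₁ ^ 2 = 4 * (2 + M₂) ^ 2 * (M₂ - 1) := by
  obtain ⟨ht1, ht2⟩ := ht
  have hπ := Real.pi_pos
  set c := Real.cos t with hc
  have h1 : c < 1/2 := by
    have := Real.cos_lt_cos_of_nonneg_of_le_pi (by positivity) (by linarith) ht1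
    rwa [Real.cos_pi_div_three] at this
  have h2 : -(1/2) < c := by
    have := Real.cos_lt_cos_of_nonneg_of_le_pi (by linarith)
      (le_of_lt (by linarith [Real.two_le_pi] : 2 * Real.pi / 3 < Real.pi)) ht2
    rw [show (2:ℝ) * Real.pi / 3 = Real.pi - Real.pi/3 by ring, Real.cos_pi_sub,
      Real.cos_pi_div_three] at this
    linarith
  have hD : 1 + 2 * Real.cos (2*t) = 4*c^2 - 1 := by
    rw [Real.cos_two_mul]; ring
  have hDneg : 4*c^2 - 1 < 0 := by nlinarith
  have hDne : 4*c^2 - 1 ≠ 0 := ne_of_lt hDneg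
  rw [hD] at hM₂
  have hM₂pos : 0 < M₂ := by
    rw [hM₂]
    exact div_pos_of_neg_of_neg (by norm_num) hDneg
  have h3t : Real.cos (3*t) = 4*c^3 - 3*c := Real.cos_three_mul t
  have hsq : Real.sqrt M₂ ^ 2 = M₂ := Real.sq_sqrt hM₂pos.le
  have h3 : Real.sqrt 3 ^ 2 = 3 := Real.sq_sqrt (by norm_num)
  have h3ne : Real.sqrt 3 ≠ 0 := by positivity
  rw [hM₁, h3t]
  have expand : 27 * (2 / (3 * Real.sqrt 3) * Real.sqrt M₂ *
      (3 * c - M₂ * (4*c^3 - 3*c))) ^ 2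
      = 4 * M₂ * (3 * c - M₂ * (4*c^3 - 3*c)) ^ 2 := by
    field_simp
    linear_combination 108 * (3 * c - M₂ * (4*c^3 - 3*c))^2 * hsq -
      36 * M₂ * (3 * c - M₂ * (4*c^3 - 3*c))^2 * h3
  rw [expand, hM₂]
  field_simp
  ring
end
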